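/- arXiv:1204.2530 — 2 statements merged into one kernel-verified Lean document; each statement's English description precedes it below -/
import Mathlib

section
/- The constant c_n = |B_2^n|^{(n-1)/n} / |B_2^{n-1}| satisfies c_n > 1/\sqrt{e} for every integer n \ge 2, where |B_2^k| denotes the volume of the k-dimensional Euclidean unit ball. -/
/-!
Writing both ball volumes through `Γ`, `c_n = Γ(x + 1/2) / Γ(x + 1)^(1 - 1/(2x))` with `x = n/2`.
Log-convexity of `Γ` gives `Γ(x + 1) ≤ √(x + 1/2) Γ(x + 1/2)`, so it suffices to have the
Stirling-type bound `Γ(x + 1) > ((x + 1/2)/e)^x`: then `Γ(x + 1)^(1/(2x)) > √((x + 1/2)/e)`,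
and the factors `√(x + 1/2)` cancel. The Stirling-type bound is checked at `x = 1` and
`x = 3/2` and propagates from `x` to `x + 1` through `Γ(x + 2) = (x + 1) Γ(x + 1)` and
`1 + t ≤ eᵗ`.
-/

open MeasureTheory Filter Topology
open scoped Pointwise RealInnerProductSpace NNReal ENNReal

noncomputable section

/-- Euclidean space ℝ^n. -/
abbrev E (n : ℕ) := EuclideanSpace ℝ (Fin n)

/-- n-dimensional volume (Lebesgue measure), as a real number. -/
def vol {n : ℕ} (A : Set (E n)) : ℝ := (volume A).toReal

/-- Volume of the k-dimensional Euclidean unit ball. -/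
def ballVol (k : ℕ) : ℝ := (volume (Metric.closedBall (0 : E k) 1)).toReal

/-- The constant c_n = |B_2^n|^{(n-1)/n} / |B_2^{n-1}|. -/
def cc (n : ℕ) : ℝ := ballVol n ^ ((n - 1 : ℝ) / n) / ballVol (n - 1)

/-- Orthogonal projection onto the hyperplane ξ^⊥ (for ξ a unit vector). -/
def projMap {n : ℕ} (ξ : E n) : E n → E n := fun x => x - ⟪x, ξ⟫ • ξ

/-- The central hyperplane perpendicular to ξ. -/
def hyp {n : ℕ} (ξ : E n) : Set (E n) := {x | ⟪x, ξ⟫ = 0}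

/-- (n-1)-dimensional volume of the projection of L onto ξ^⊥,
computed via (n-1)-dimensional Hausdorff measure. -/
def projVol {n : ℕ} (L : Set (E n)) (ξ : E n) : ℝ :=
  (μH[(n - 1 : ℝ)] (projMap ξ '' L)).toReal

/-- Support function of a set. -/
def suppFn {n : ℕ} (L : Set (E n)) (θ : E n) : ℝ :=
  sSup ((fun y => ⟪y, θ⟫) '' L)

/-- The unit sphere S^{n-1}. -/
def sphere (n : ℕ) : Set (E n) := Metric.sphere 0 1

/-- Origin-symmetric convex body. -/
def IsSymConvexBody {n : ℕ} (K : Set (E n)) : Prop :=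
  IsCompact K ∧ Convex ℝ K ∧ (interior K).Nonempty ∧ K = -K

/-- L is a projection body: a convex body whose support function in every direction
θ ∈ S^{n-1} equals the volume of the hyperplane projection of some convex body M. -/
def IsProjectionBody {n : ℕ} (L : Set (E n)) : Prop :=
  IsCompact L ∧ Convex ℝ L ∧ (interior L).Nonempty ∧
  ∃ M : Set (E n), IsCompact M ∧ Convex ℝ M ∧ (interior M).Nonempty ∧
    ∀ θ ∈ sphere n, suppFn L θ = projVol M θ

open Real

lemma Real.Gamma_add_half_le_sqrt_mul_Gamma {s : ℝ} (hs : 0 < s) :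
    Gamma (s + 1 / 2) ≤ √s * Gamma s := by
  have hΓ := Gamma_pos_of_pos hs
  calc Gamma (s + 1 / 2) = Gamma (1 / 2 * s + 1 / 2 * (s + 1)) := by ring_nf
    _ ≤ Gamma s ^ (1 / 2 : ℝ) * Gamma (s + 1) ^ (1 / 2 : ℝ) :=
        Gamma_mul_add_mul_le_rpow_Gamma_mul_rpow_Gamma hs (by linarith) (by norm_num)
          (by norm_num) (by norm_num)
    _ = √(s * Gamma s ^ 2) := by
        rw [Gamma_add_one hs.ne', ← mul_rpow hΓ.le (by positivity), ← sqrt_eq_rpow]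
        ring_nf
    _ = √s * Gamma s := by rw [sqrt_mul hs.le, sqrt_sq hΓ.le]

def gammaMinorant (x : ℝ) : ℝ := ((x + 1 / 2) / exp 1) ^ x

lemma gammaMinorant_add_one_le {x : ℝ} (hx : 0 ≤ x) :
    gammaMinorant (x + 1) ≤ (x + 1) * gammaMinorant x := by
  rw [gammaMinorant, gammaMinorant, show x + 1 + 1 / 2 = x + 1 / 2 + 1 by ring]
  set a := x + 1 / 2 with ha_def
  have ha : 0 < a := by positivity
  have hpow : ((a + 1) / a) ^ x ≤ exp (x / a) := by
    calc ((a + 1) / a) ^ x ≤ exp (1 / a) ^ x := by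
          gcongr
          rw [add_div, div_self ha.ne', add_comm]
          exact add_one_le_exp _
      _ = exp (x / a) := by rw [← exp_mul]; ring_nf
  -- `exp (x / a) · exp (1/(2a)) = e`, and `a + 1 ≤ (x + 1)(1 + 1/(2a)) ≤ (x + 1) exp (1/(2a))`
  have hfactor : exp (x / a) * ((a + 1) / exp 1) ≤ x + 1 := by
    have hsplit : exp (x / a) * exp (1 / (2 * a)) = exp 1 := by
      rw [← exp_add]; congr 1; field_simp; ring
    have hlin : a + 1 ≤ (x + 1) * exp (1 / (2 * a)) := by
      have hexp := add_one_le_exp (1 / (2 * a))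
      have h4 : (x + 1) * (1 / (2 * a) + 1) = a + 1 + 1 / (4 * a) := by
        rw [ha_def]; field_simp; ring
      nlinarith [one_div_pos.2 (mul_pos four_pos ha)]
    rw [← hsplit, ← mul_div_assoc, mul_div_mul_left _ _ (exp_pos _).ne',
      div_le_iff₀ (exp_pos _)]
    exact hlin
  calc ((a + 1) / exp 1) ^ (x + 1)
        = ((a + 1) / a) ^ x * (a / exp 1) ^ x * ((a + 1) / exp 1) := by
        rw [rpow_add_one (by positivity), ← mul_rpow (by positivity) (by positivity)]
        field_simp
    _ ≤ exp (x / a) * (a / exp 1) ^ x * ((a + 1) / exp 1) := by gcongr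
    _ = exp (x / a) * ((a + 1) / exp 1) * (a / exp 1) ^ x := by ring
    _ ≤ (x + 1) * (a / exp 1) ^ x := by gcongr

lemma gammaMinorant_add_one_lt_Gamma {x : ℝ} (hx : 0 ≤ x)
    (h : gammaMinorant x < Gamma (x + 1)) : gammaMinorant (x + 1) < Gamma (x + 1 + 1) :=
  calc gammaMinorant (x + 1) ≤ (x + 1) * gammaMinorant x := gammaMinorant_add_one_le hx
    _ < (x + 1) * Gamma (x + 1) := by gcongr
    _ = Gamma (x + 1 + 1) := (Gamma_add_one (by positivity)).symm

lemma gammaMinorant_half_lt_Gamma {n : ℕ} (hn : 2 ≤ n) :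
    gammaMinorant ((n : ℝ) / 2) < Gamma ((n : ℝ) / 2 + 1) := by
  have he := exp_one_gt_d9
  obtain ⟨m, rfl⟩ := Nat.exists_eq_add_of_le hn
  clear hn
  induction m using Nat.twoStepInduction with
  | zero =>
    norm_num [gammaMinorant, Gamma_two]
    rw [div_lt_one (by positivity)]
    linarith
  | one =>
    -- `Γ(5/2) = 3√π/4 ≥ 1` while the left-hand side is a positive power of `2/e < 1`
    have hΓ : Gamma (5 / 2) = 3 / 4 * √π := by
      rw [show (5 / 2 : ℝ) = 1 / 2 + 1 + 1 by norm_num, Gamma_add_one (by norm_num),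
        Gamma_add_one (by norm_num), Gamma_one_half_eq]
      ring
    have hπ : 4 / 3 ≤ √π := le_sqrt_of_sq_le (by nlinarith [pi_gt_three])
    have hlt : ((2 : ℝ) / exp 1) ^ (3 / 2 : ℝ) < 1 :=
      rpow_lt_one (by positivity) ((div_lt_one (by positivity)).2 (by linarith)) (by norm_num)
    norm_num [gammaMinorant, hΓ]
    linarith
  | more m h _ =>
    convert gammaMinorant_add_one_lt_Gamma (by positivity) h using 2 <;> push_cast <;> ring

lemma inv_sqrt_exp_lt_Gamma_div_rpow {x : ℝ} (hx : 0 < x)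
    (h : gammaMinorant x < Gamma (x + 1)) :
    1 / √(exp 1) < Gamma (x + 1 / 2) / Gamma (x + 1) ^ (1 - 1 / (2 * x)) := by
  have hG := Gamma_pos_of_pos (show 0 < x + 1 by linarith)
  have hH := Gamma_pos_of_pos (show 0 < x + 1 / 2 by linarith)
  have ha : 0 < (x + 1 / 2) / exp 1 := by positivity
  have hroot : √(x + 1 / 2) / √(exp 1) < Gamma (x + 1) ^ (1 / (2 * x)) := by
    have := rpow_lt_rpow (by unfold gammaMinorant; positivity) h
      (show 0 < 1 / (2 * x) by positivity)
    rwa [gammaMinorant, ← rpow_mul ha.le, show x * (1 / (2 * x)) = 1 / 2 by field_simp,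
      ← sqrt_eq_rpow, sqrt_div' _ (exp_pos 1).le] at this
  have hgautschi : Gamma (x + 1) ≤ √(x + 1 / 2) * Gamma (x + 1 / 2) := by
    convert Gamma_add_half_le_sqrt_mul_Gamma (show 0 < x + 1 / 2 by linarith) using 2
    ring
  calc 1 / √(exp 1) = Gamma (x + 1 / 2) * (√(x + 1 / 2) / √(exp 1))
        / (√(x + 1 / 2) * Gamma (x + 1 / 2)) := by field_simp
    _ < Gamma (x + 1 / 2) * Gamma (x + 1) ^ (1 / (2 * x))
        / (√(x + 1 / 2) * Gamma (x + 1 / 2)) := by gcongr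
    _ ≤ Gamma (x + 1 / 2) * Gamma (x + 1) ^ (1 / (2 * x)) / Gamma (x + 1) := by gcongr
    _ = Gamma (x + 1 / 2) / Gamma (x + 1) ^ (1 - 1 / (2 * x)) := by
        rw [rpow_sub hG, rpow_one]
        field_simp

lemma ballVol_eq {k : ℕ} (hk : k ≠ 0) : ballVol k = √π ^ k / Gamma ((k : ℝ) / 2 + 1) := by
  have : Nonempty (Fin k) := ⟨⟨0, Nat.pos_of_ne_zero hk⟩⟩
  rw [ballVol, EuclideanSpace.volume_closedBall, Fintype.card_fin, ENNReal.ofReal_one, one_pow,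
    one_mul, ENNReal.toReal_ofReal (by positivity)]

lemma cc_eq_Gamma {n : ℕ} (hn : 2 ≤ n) :
    cc n = Gamma ((n : ℝ) / 2 + 1 / 2) / Gamma ((n : ℝ) / 2 + 1) ^ (((n : ℝ) - 1) / n) := by
  have hcast : ((n - 1 : ℕ) : ℝ) = n - 1 := by rw [Nat.cast_sub (by omega), Nat.cast_one]
  have hG := Gamma_pos_of_pos (show 0 < (n : ℝ) / 2 + 1 by positivity)
  have hpow : (√π ^ n) ^ (((n : ℝ) - 1) / n) = √π ^ (n - 1) := by
    rw [← rpow_natCast, ← rpow_natCast, ← rpow_mul (sqrt_nonneg π), hcast]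
    field_simp
  rw [cc, ballVol_eq (by omega), ballVol_eq (by omega), div_rpow (by positivity) hG.le, hpow, hcast,
    div_div_div_cancel_left' _ _ (by positivity)]
  ring_nf

theorem stmt0 : ∀ n : ℕ, 2 ≤ n → cc n > 1 / Real.sqrt (Real.exp 1) := by
  intro n hn
  have hx : (0 : ℝ) < n / 2 := by positivity
  rw [gt_iff_lt, cc_eq_Gamma hn, show ((n : ℝ) - 1) / n = 1 - 1 / (2 * (n / 2)) by field_simp]
  exact inv_sqrt_exp_lt_Gamma_div_rpow hx (gammaMinorant_half_lt_Gamma hn)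
end
end

section
/- Let K and L be convex bodies in \mathbb{R}^n. Then the first mixed volume V_1(K,L) := (1/n) \lim_{\varepsilon \to 0^+} (|K + \varepsilon L| - |K|)/\varepsilon satisfies V_1(K,L) \ge |K|^{(n-1)/n} |L|^{1/n} (Minkowski's first inequality). -/
open MeasureTheory Filter Topology
open scoped Pointwise RealInnerProductSpace NNReal ENNReal

noncomputable section

/-!
By the Brunn–Minkowski inequality, `|K + εL|^(1/n) ≥ |K|^(1/n) + ε|L|^(1/n)`, so `ε ↦ |K + εL|`
dominates the polynomial `(|K|^(1/n) + ε|L|^(1/n))^n` on `ε > 0` and agrees with it at `ε = 0`;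
comparing right derivatives at `0` gives `n V₁(K, L) ≥ n |K|^((n-1)/n) |L|^(1/n)`.

Brunn–Minkowski is proved in its multiplicative form `|(1-t)A + tB| ≥ |A|^(1-t) |B|^t` for
compact `A`, `B`, by induction on the dimension. Slicing `ℝ × G` along the first coordinate, the
slice volumes satisfy the hypothesis of the one-dimensional Prékopa–Leindler inequality. That
inequality follows, after normalising both functions to supremum `1`, from the one-dimensional
Brunn–Minkowski inequality `|A + B| ≥ |A| + |B|` applied to superlevel sets. A Haar measure on a
finite-dimensional space is a constant multiple of the pushforward of Lebesgue measure on `ℝⁿ`,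
and the multiplicative form is invariant under such rescaling. The additive form follows by
applying the multiplicative one to `|A|^(-1/n) A` and `|B|^(-1/n) B` with
`t = |B|^(1/n) / (|A|^(1/n) + |B|^(1/n))`.
-/

section BrunnMinkowski

open Set

theorem measure_le_measure_add_left {G : Type*} [AddGroup G] [MeasurableSpace G] [MeasurableAdd G]
    (μ : Measure G) [μ.IsAddLeftInvariant] {A B : Set G} {a : G} (ha : a ∈ A) :
    μ B ≤ μ (A + B) :=
  calc μ B = μ ({a} + B) := by simp
    _ ≤ μ (A + B) := measure_mono (add_subset_add_right (singleton_subset_iff.2 ha))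

theorem measure_le_measure_add_right {G : Type*} [AddCommGroup G] [MeasurableSpace G]
    [MeasurableAdd G] (μ : Measure G) [μ.IsAddLeftInvariant] {A B : Set G} {b : G} (hb : b ∈ B) :
    μ A ≤ μ (A + B) := by
  rw [add_comm]
  exact measure_le_measure_add_left μ hb

theorem Real.volume_add_volume_le_volume_add_of_isCompact {A B : Set ℝ} (hA : IsCompact A)
    (hB : IsCompact B) (hA₀ : A.Nonempty) (hB₀ : B.Nonempty) :
    volume A + volume B ≤ volume (A + B) := by
  set a := sSup A
  set b := sInf B
  have ha : a ∈ A := hA.sSup_mem hA₀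
  have hb : b ∈ B := hB.sInf_mem hB₀
  -- The translates `A + {b}` and `{a} + B` lie in `A + B` and meet only at `a + b`.
  have hinter : (A + {b}) ∩ ({a} + B) ⊆ {a + b} := by
    rintro _ ⟨⟨x, hx, _, rfl, rfl⟩, ⟨_, rfl, y, hy, hxy⟩⟩
    have hxa := le_csSup hA.bddAbove hx
    have hby := csInf_le hB.bddBelow hy
    rw [mem_singleton_iff]
    linarith
  have hmeas : MeasurableSet ({a} + B) := (isCompact_singleton.add hB).isClosed.measurableSet
  calc volume A + volume B = volume (A + {b}) + volume ({a} + B) := by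
        rw [add_comm A]; simp
    _ = volume ((A + {b}) ∪ ({a} + B)) + volume ((A + {b}) ∩ ({a} + B)) :=
        (measure_union_add_inter _ hmeas).symm
    _ ≤ volume (A + B) + volume {a + b} :=
        add_le_add (measure_mono (union_subset (add_subset_add_left (singleton_subset_iff.2 hb))
          (add_subset_add_right (singleton_subset_iff.2 ha)))) (measure_mono hinter)
    _ = volume (A + B) := by rw [measure_singleton, add_zero]

theorem Real.volume_add_volume_le_volume_add {A B : Set ℝ} (hA : MeasurableSet A)
    (hB : MeasurableSet B) (hA₀ : A.Nonempty) (hB₀ : B.Nonempty) :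
    volume A + volume B ≤ volume (A + B) := by
  obtain ⟨a, ha⟩ := hA₀
  obtain ⟨b, hb⟩ := hB₀
  rcases eq_or_ne (volume A) 0 with hA0 | hA0
  · simpa [hA0] using measure_le_measure_add_left volume ha
  rcases eq_or_ne (volume B) 0 with hB0 | hB0
  · simpa [hB0] using measure_le_measure_add_right volume hb
  refine le_of_forall_lt fun r hr => ?_
  obtain ⟨r₁, hr₁, r₂, hr₂, hr⟩ := ENNReal.exists_lt_add_of_lt_add hr hA0 hB0
  obtain ⟨K, hKA, hK, hr₁K⟩ := hA.exists_lt_isCompact hr₁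
  obtain ⟨K', hK'B, hK', hr₂K'⟩ := hB.exists_lt_isCompact hr₂
  calc r < r₁ + r₂ := hr
    _ ≤ volume (insert a K) + volume (insert b K') :=
        add_le_add (hr₁K.le.trans (measure_mono (subset_insert _ _)))
          (hr₂K'.le.trans (measure_mono (subset_insert _ _)))
    _ ≤ volume (insert a K + insert b K') :=
        Real.volume_add_volume_le_volume_add_of_isCompact (hK.insert a) (hK'.insert b)
          (insert_nonempty _ _) (insert_nonempty _ _)
    _ ≤ volume (A + B) :=
        measure_mono (add_subset_add (insert_subset ha hKA) (insert_subset hb hK'B))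

theorem Real.ofReal_mul_volume_add_ofReal_mul_volume_le {t : ℝ} (ht₀ : 0 ≤ t) (ht₁ : t ≤ 1)
    {A B : Set ℝ} (hA : MeasurableSet A) (hB : MeasurableSet B) (hA₀ : A.Nonempty)
    (hB₀ : B.Nonempty) :
    ENNReal.ofReal (1 - t) * volume A + ENNReal.ofReal t * volume B
      ≤ volume ((1 - t) • A + t • B) :=
  calc ENNReal.ofReal (1 - t) * volume A + ENNReal.ofReal t * volume B
      = volume ((1 - t) • A) + volume (t • B) := by
        simp [Measure.addHaar_smul_of_nonneg _ (sub_nonneg.2 ht₁),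
          Measure.addHaar_smul_of_nonneg _ ht₀]
    _ ≤ volume ((1 - t) • A + t • B) :=
        Real.volume_add_volume_le_volume_add (hA.const_smul₀ _) (hB.const_smul₀ _)
          hA₀.smul_set hB₀.smul_set

theorem lintegral_eq_lintegral_Ioi_measure_lt {α : Type*} [MeasurableSpace α] (μ : Measure α)
    [SFinite μ] {f : α → ℝ≥0∞} (hf : Measurable f) :
    ∫⁻ x, f x ∂μ = ∫⁻ s in Ioi (0 : ℝ), μ {x | ENNReal.ofReal s < f x} := by
  have hlevel (c : ℝ≥0∞) : volume {s : ℝ | 0 < s ∧ ENNReal.ofReal s < c} = c := by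
    rcases eq_or_ne c ∞ with rfl | hc
    · simp only [ENNReal.ofReal_lt_top, and_true]
      exact Real.volume_Ioi
    · have : {s : ℝ | 0 < s ∧ ENNReal.ofReal s < c} = Ioo 0 c.toReal := by
        ext s
        simp +contextual [ENNReal.ofReal_lt_iff_lt_toReal, hc, le_of_lt]
      rw [this, Real.volume_Ioo, sub_zero, ENNReal.ofReal_toReal hc]
  set S : Set (α × ℝ) := {p | 0 < p.2 ∧ ENNReal.ofReal p.2 < f p.1}
  have hS : MeasurableSet S := (measurableSet_lt measurable_const measurable_snd).inter
    (measurableSet_lt (ENNReal.measurable_ofReal.comp measurable_snd) (hf.comp measurable_fst))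
  calc ∫⁻ x, f x ∂μ = ∫⁻ x, volume (Prod.mk x ⁻¹' S) ∂μ := lintegral_congr fun x => (hlevel _).symm
    _ = μ.prod volume S := (Measure.prod_apply hS).symm
    _ = ∫⁻ s, μ ((·, s) ⁻¹' S) := Measure.prod_apply_symm hS
    _ = ∫⁻ s in Ioi (0 : ℝ), μ {x | ENNReal.ofReal s < f x} := by
        rw [← lintegral_indicator measurableSet_Ioi]
        congr 1 with s
        by_cases hs : 0 < s <;> simp [S, hs]

theorem ENNReal.rpow_mul_rpow_le_add {t : ℝ} (ht₀ : 0 < t) (ht₁ : t < 1) (a b : ℝ≥0∞) :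
    a ^ (1 - t) * b ^ t ≤ ENNReal.ofReal (1 - t) * a + ENNReal.ofReal t * b := by
  have h1t : 0 < 1 - t := sub_pos.2 ht₁
  have hconj : (1 - t)⁻¹.HolderConjugate t⁻¹ :=
    Real.holderConjugate_iff.2 ⟨one_lt_inv₀ h1t |>.2 (by linarith), by simp⟩
  have key := ENNReal.young_inequality (a ^ (1 - t)) (b ^ t) hconj
  rwa [ENNReal.rpow_rpow_inv h1t.ne', ENNReal.rpow_rpow_inv ht₀.ne',
    ENNReal.ofReal_inv_of_pos h1t, ENNReal.ofReal_inv_of_pos ht₀, div_eq_mul_inv, div_eq_mul_inv,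
    inv_inv, inv_inv, mul_comm a, mul_comm b] at key

theorem ENNReal.min_le_rpow_mul_rpow {t : ℝ} (ht₀ : 0 ≤ t) (ht₁ : t ≤ 1) (a b : ℝ≥0∞) :
    min a b ≤ a ^ (1 - t) * b ^ t :=
  calc min a b = min a b ^ (1 - t) * min a b ^ t := by
        rw [← ENNReal.rpow_add_of_nonneg _ _ (sub_nonneg.2 ht₁) ht₀, sub_add_cancel,
          ENNReal.rpow_one]
    _ ≤ a ^ (1 - t) * b ^ t :=
        mul_le_mul' (ENNReal.rpow_le_rpow (min_le_left _ _) (sub_nonneg.2 ht₁))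
          (ENNReal.rpow_le_rpow (min_le_right _ _) ht₀)

theorem lintegral_add_le_of_min_le {t : ℝ} (ht₀ : 0 ≤ t) (ht₁ : t ≤ 1) {f g h : ℝ → ℝ≥0∞}
    (hf : Measurable f) (hg : Measurable g) (hh : Measurable h) (hfg : ⨆ x, f x = ⨆ y, g y)
    (hfgh : ∀ x y, min (f x) (g y) ≤ h ((1 - t) * x + t * y)) :
    ENNReal.ofReal (1 - t) * (∫⁻ x, f x) + ENNReal.ofReal t * ∫⁻ y, g y ≤ ∫⁻ z, h z := by
  have hlevel (s : ℝ) : ENNReal.ofReal (1 - t) * volume {x | ENNReal.ofReal s < f x}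
      + ENNReal.ofReal t * volume {y | ENNReal.ofReal s < g y}
      ≤ volume {z | ENNReal.ofReal s < h z} := by
    set A := {x | ENNReal.ofReal s < f x}
    set B := {y | ENNReal.ofReal s < g y}
    have hAB : A.Nonempty ↔ B.Nonempty := by
      simp only [A, B, Set.Nonempty, mem_ofPred_eq, ← lt_iSup_iff, hfg]
    rcases A.eq_empty_or_nonempty with hA | hA
    · rw [hA, not_nonempty_iff_eq_empty.1 (hAB.not.1 (not_nonempty_iff_eq_empty.2 hA))]
      simp
    have hsub : (1 - t) • A + t • B ⊆ {z | ENNReal.ofReal s < h z} := by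
      rintro _ ⟨_, ⟨x, hx, rfl⟩, _, ⟨y, hy, rfl⟩, rfl⟩
      exact (lt_min hx hy).trans_le (hfgh x y)
    exact (Real.ofReal_mul_volume_add_ofReal_mul_volume_le ht₀ ht₁
      (measurableSet_lt measurable_const hf) (measurableSet_lt measurable_const hg) hA
      (hAB.1 hA)).trans (measure_mono hsub)
  have hmeas (φ : ℝ → ℝ≥0∞) : Measurable fun s : ℝ => volume {x | ENNReal.ofReal s < φ x} :=
    Antitone.measurable fun s s' hss' =>
      measure_mono fun x hx => (ENNReal.ofReal_le_ofReal hss').trans_lt hx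
  rw [lintegral_eq_lintegral_Ioi_measure_lt volume hf,
    lintegral_eq_lintegral_Ioi_measure_lt volume hg,
    lintegral_eq_lintegral_Ioi_measure_lt volume hh, ← lintegral_const_mul _ (hmeas f),
    ← lintegral_const_mul _ (hmeas g), ← lintegral_add_left ((hmeas f).const_mul _)]
  exact setLIntegral_mono (hmeas h) fun s _ => hlevel s

theorem lintegral_rpow_mul_lintegral_rpow_le {t : ℝ} (ht₀ : 0 < t) (ht₁ : t < 1)
    {f g h : ℝ → ℝ≥0∞} (hf : Measurable f) (hg : Measurable g) (hh : Measurable h)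
    (hf_top : ⨆ x, f x ≠ ∞) (hg_top : ⨆ y, g y ≠ ∞)
    (hfgh : ∀ x y, f x ^ (1 - t) * g y ^ t ≤ h ((1 - t) * x + t * y)) :
    (∫⁻ x, f x) ^ (1 - t) * (∫⁻ y, g y) ^ t ≤ ∫⁻ z, h z := by
  have h1t : 0 < 1 - t := sub_pos.2 ht₁
  set Mf := ⨆ x, f x
  set Mg := ⨆ y, g y
  rcases eq_or_ne Mf 0 with hMf | hMf
  · simp [ENNReal.iSup_eq_zero.1 hMf, ENNReal.zero_rpow_of_pos h1t]
  rcases eq_or_ne Mg 0 with hMg | hMg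
  · simp [ENNReal.iSup_eq_zero.1 hMg, ENNReal.zero_rpow_of_pos ht₀]
  set d := Mf⁻¹ ^ (1 - t) * Mg⁻¹ ^ t
  have hd₀ : d ≠ 0 := by simp [d, hf_top, hg_top, hMf, hMg]
  have hd_top : d ≠ ∞ := ENNReal.mul_ne_top
    (ENNReal.rpow_ne_top_of_nonneg h1t.le (ENNReal.inv_ne_top.2 hMf))
    (ENNReal.rpow_ne_top_of_nonneg ht₀.le (ENNReal.inv_ne_top.2 hMg))
  have hsup : ⨆ x, f x * Mf⁻¹ = ⨆ y, g y * Mg⁻¹ := by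
    rw [← ENNReal.iSup_mul, ← ENNReal.iSup_mul, ENNReal.mul_inv_cancel hMf hf_top,
      ENNReal.mul_inv_cancel hMg hg_top]
  have key := lintegral_add_le_of_min_le ht₀.le ht₁.le (hf.mul_const Mf⁻¹) (hg.mul_const Mg⁻¹)
    (hh.mul_const d) hsup fun x y =>
    calc min (f x * Mf⁻¹) (g y * Mg⁻¹) ≤ (f x * Mf⁻¹) ^ (1 - t) * (g y * Mg⁻¹) ^ t :=
          ENNReal.min_le_rpow_mul_rpow ht₀.le ht₁.le _ _
      _ = f x ^ (1 - t) * g y ^ t * d := by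
          rw [ENNReal.mul_rpow_of_nonneg _ _ h1t.le, ENNReal.mul_rpow_of_nonneg _ _ ht₀.le]
          ring
      _ ≤ h ((1 - t) * x + t * y) * d := mul_le_mul_left (hfgh x y) d
  rw [lintegral_mul_const _ hf, lintegral_mul_const _ hg, lintegral_mul_const _ hh] at key
  refine (ENNReal.mul_le_mul_iff_left hd₀ hd_top).1 ?_
  calc (∫⁻ x, f x) ^ (1 - t) * (∫⁻ y, g y) ^ t * d
      = ((∫⁻ x, f x) * Mf⁻¹) ^ (1 - t) * ((∫⁻ y, g y) * Mg⁻¹) ^ t := by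
        rw [ENNReal.mul_rpow_of_nonneg _ _ h1t.le, ENNReal.mul_rpow_of_nonneg _ _ ht₀.le]
        ring
    _ ≤ ENNReal.ofReal (1 - t) * ((∫⁻ x, f x) * Mf⁻¹) + ENNReal.ofReal t * ((∫⁻ y, g y) * Mg⁻¹) :=
        ENNReal.rpow_mul_rpow_le_add ht₀ ht₁ _ _
    _ ≤ (∫⁻ z, h z) * d := key

def SatisfiesBrunnMinkowski {F : Type*} [Add F] [SMul ℝ F] [TopologicalSpace F]
    [MeasurableSpace F] (μ : Measure F) : Prop :=
  ∀ ⦃t : ℝ⦄, 0 < t → t < 1 → ∀ ⦃A B : Set F⦄, IsCompact A → IsCompact B → A.Nonempty →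
    B.Nonempty → μ A ^ (1 - t) * μ B ^ t ≤ μ ((1 - t) • A + t • B)

theorem SatisfiesBrunnMinkowski.of_subsingleton {F : Type*} [Add F] [SMul ℝ F]
    [TopologicalSpace F] [MeasurableSpace F] [Subsingleton F] (μ : Measure F) :
    SatisfiesBrunnMinkowski μ := by
  intro t ht₀ ht₁ A B _ _ hA₀ hB₀
  rw [(hA₀.smul_set.add hB₀.smul_set).eq_univ, hA₀.eq_univ, hB₀.eq_univ,
    ← ENNReal.rpow_add_of_nonneg _ _ (sub_pos.2 ht₁).le ht₀.le, sub_add_cancel, ENNReal.rpow_one]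

theorem SatisfiesBrunnMinkowski.volume_prod {G : Type*} [AddCommGroup G] [Module ℝ G]
    [TopologicalSpace G] [T2Space G] [ContinuousAdd G] [ContinuousSMul ℝ G] [MeasurableSpace G]
    [OpensMeasurableSpace G] {ν : Measure G} [SFinite ν] [IsFiniteMeasureOnCompacts ν]
    (hν : SatisfiesBrunnMinkowski ν) : SatisfiesBrunnMinkowski ((volume : Measure ℝ).prod ν) := by
  intro t ht₀ ht₁ A B hA hB hA₀ hB₀
  set C := (1 - t) • A + t • B
  have hC : IsCompact C := (hA.smul _).add (hB.smul _)
  have hslice {S : Set (ℝ × G)} (hS : IsCompact S) (r : ℝ) : IsCompact (Prod.mk r ⁻¹' S) :=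
    (hS.image continuous_snd).of_isClosed_subset (hS.isClosed.preimage (.prodMk_right r))
      fun y hy => ⟨(r, y), hy, rfl⟩
  have hsup {S : Set (ℝ × G)} (hS : IsCompact S) : ⨆ r, ν (Prod.mk r ⁻¹' S) ≠ ∞ :=
    ne_top_of_le_ne_top (hS.image continuous_snd).measure_lt_top.ne
      (iSup_le fun r => measure_mono fun y hy => ⟨(r, y), hy, rfl⟩)
  have hmeas {S : Set (ℝ × G)} (hS : IsCompact S) : Measurable fun r => ν (Prod.mk r ⁻¹' S) :=
    measurable_measure_prodMk_left hS.measurableSet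
  have hfgh (x y : ℝ) : ν (Prod.mk x ⁻¹' A) ^ (1 - t) * ν (Prod.mk y ⁻¹' B) ^ t
      ≤ ν (Prod.mk ((1 - t) * x + t * y) ⁻¹' C) := by
    rcases (Prod.mk x ⁻¹' A).eq_empty_or_nonempty with hAx | hAx
    · simp [hAx, ENNReal.zero_rpow_of_pos (sub_pos.2 ht₁)]
    rcases (Prod.mk y ⁻¹' B).eq_empty_or_nonempty with hBy | hBy
    · simp [hBy, ENNReal.zero_rpow_of_pos ht₀]
    refine (hν ht₀ ht₁ (hslice hA x) (hslice hB y) hAx hBy).trans (measure_mono ?_)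
    rintro _ ⟨_, ⟨u, hu, rfl⟩, _, ⟨v, hv, rfl⟩, rfl⟩
    exact ⟨(1 - t) • (x, u), smul_mem_smul_set hu, t • (y, v), smul_mem_smul_set hv, rfl⟩
  simpa only [Measure.prod_apply hA.measurableSet, Measure.prod_apply hB.measurableSet,
    Measure.prod_apply hC.measurableSet] using lintegral_rpow_mul_lintegral_rpow_le ht₀ ht₁
      (hmeas hA) (hmeas hB) (hmeas hC) (hsup hA) (hsup hB) hfgh

section FiniteDimensional

open Module

variable {F F' : Type*} [NormedAddCommGroup F] [NormedSpace ℝ F] [MeasurableSpace F]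
  [BorelSpace F] [NormedAddCommGroup F'] [NormedSpace ℝ F'] [FiniteDimensional ℝ F']
  [MeasurableSpace F'] [BorelSpace F']

theorem SatisfiesBrunnMinkowski.of_continuousLinearEquiv {ν : Measure F'} [ν.IsAddHaarMeasure]
    (hν : SatisfiesBrunnMinkowski ν) (e : F ≃L[ℝ] F') (μ : Measure F) [μ.IsAddHaarMeasure] :
    SatisfiesBrunnMinkowski μ := by
  intro t ht₀ ht₁ A B hA hB hA₀ hB₀
  have h1t : 0 < 1 - t := sub_pos.2 ht₁
  set c : ℝ≥0∞ := ↑((μ.map e).addHaarScalarFactor ν)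
  have hμ (S : Set F) : μ S = c * ν (e '' S) :=
    calc μ S = μ (e ⁻¹' (e '' S)) := by rw [e.injective.preimage_image]
      _ = μ.map e (e '' S) := (e.toHomeomorph.toMeasurableEquiv.map_apply _).symm
      _ = c * ν (e '' S) := congrArg (· (e '' S)) (Measure.isAddLeftInvariant_eq_smul (μ.map e) ν)
  rw [hμ, hμ, hμ, image_add, image_smul_set, image_smul_set]
  calc (c * ν (e '' A)) ^ (1 - t) * (c * ν (e '' B)) ^ t
      = c * (ν (e '' A) ^ (1 - t) * ν (e '' B) ^ t) := by
        rw [ENNReal.mul_rpow_of_nonneg _ _ h1t.le, ENNReal.mul_rpow_of_nonneg _ _ ht₀.le,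
          mul_mul_mul_comm, ← ENNReal.rpow_add_of_nonneg _ _ h1t.le ht₀.le, sub_add_cancel,
          ENNReal.rpow_one]
    _ ≤ c * ν ((1 - t) • e '' A + t • e '' B) := mul_le_mul_right (hν ht₀ ht₁
        (hA.image e.continuous) (hB.image e.continuous) (hA₀.image e) (hB₀.image e)) c

theorem satisfiesBrunnMinkowski_volume_pi :
    ∀ n : ℕ, SatisfiesBrunnMinkowski (volume : Measure (Fin n → ℝ))
  | 0 => .of_subsingleton _
  | n + 1 => (satisfiesBrunnMinkowski_volume_pi n).volume_prod.of_continuousLinearEquiv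
      (Fin.consEquivL ℝ fun _ => ℝ).symm volume

variable [FiniteDimensional ℝ F] (μ : Measure F) [μ.IsAddHaarMeasure]

theorem satisfiesBrunnMinkowski_addHaar : SatisfiesBrunnMinkowski μ :=
  (satisfiesBrunnMinkowski_volume_pi (finrank ℝ F)).of_continuousLinearEquiv
    (.ofFinrankEq (by simp)) μ

theorem addHaar_inv_rpow_smul_eq_one (hn : 0 < finrank ℝ F) {S : Set F}
    (hS : 0 < (μ S).toReal) : μ (((μ S).toReal ^ (finrank ℝ F : ℝ)⁻¹)⁻¹ • S) = 1 := by
  obtain ⟨hS₀, hS_top⟩ := ENNReal.toReal_pos_iff.1 hS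
  rw [Measure.addHaar_smul_of_nonneg μ (by positivity), inv_pow,
    Real.rpow_inv_natCast_pow hS.le hn.ne', ENNReal.ofReal_inv_of_pos hS,
    ENNReal.ofReal_toReal hS_top.ne, ENNReal.inv_mul_cancel hS₀.ne' hS_top.ne]

theorem addHaar_toReal_rpow_add_le (hn : 0 < finrank ℝ F) {A B : Set F} (hA : IsCompact A)
    (hB : IsCompact B) (hA₀ : A.Nonempty) (hB₀ : B.Nonempty) :
    (μ A).toReal ^ (finrank ℝ F : ℝ)⁻¹ + (μ B).toReal ^ (finrank ℝ F : ℝ)⁻¹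
      ≤ (μ (A + B)).toReal ^ (finrank ℝ F : ℝ)⁻¹ := by
  set n := finrank ℝ F
  have hmono {S : Set F} (hS : μ S ≤ μ (A + B)) :
      (μ S).toReal ^ (n : ℝ)⁻¹ ≤ (μ (A + B)).toReal ^ (n : ℝ)⁻¹ :=
    Real.rpow_le_rpow ENNReal.toReal_nonneg
      (ENNReal.toReal_mono (hA.add hB).measure_lt_top.ne hS) (by positivity)
  rcases (ENNReal.toReal_nonneg : 0 ≤ (μ A).toReal).eq_or_lt with ha | ha
  · rw [← ha, Real.zero_rpow (by positivity), zero_add]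
    exact hmono (measure_le_measure_add_left μ hA₀.some_mem)
  rcases (ENNReal.toReal_nonneg : 0 ≤ (μ B).toReal).eq_or_lt with hb | hb
  · rw [← hb, Real.zero_rpow (by positivity), add_zero]
    exact hmono (measure_le_measure_add_right μ hB₀.some_mem)
  set α := (μ A).toReal ^ (n : ℝ)⁻¹
  set β := (μ B).toReal ^ (n : ℝ)⁻¹
  have hα : 0 < α := by positivity
  have hβ : 0 < β := by positivity
  set t := β / (α + β)
  have hcomb : (1 - t) • α⁻¹ • A + t • β⁻¹ • B = (α + β)⁻¹ • (A + B) := by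
    rw [smul_add, smul_smul, smul_smul]
    congr 2
    · simp only [t]
      field_simp
      ring
    · simp only [t]
      field_simp
  have key := satisfiesBrunnMinkowski_addHaar μ (t := t) (by positivity)
    ((div_lt_one (by positivity)).2 (by linarith)) (hA.smul α⁻¹) (hB.smul β⁻¹)
    (hA₀.smul_set (a := α⁻¹)) (hB₀.smul_set (a := β⁻¹))
  rw [addHaar_inv_rpow_smul_eq_one μ hn ha, addHaar_inv_rpow_smul_eq_one μ hn hb,
    ENNReal.one_rpow, ENNReal.one_rpow, one_mul, hcomb] at key
  have hsum : (α + β) ^ n ≤ (μ (A + B)).toReal := by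
    have := ENNReal.toReal_mono ((hA.add hB).smul (α + β)⁻¹).measure_lt_top.ne key
    rwa [ENNReal.toReal_one, Measure.addHaar_smul_of_nonneg μ (by positivity), ENNReal.toReal_mul,
      ENNReal.toReal_ofReal (by positivity), inv_pow, one_le_inv_mul₀ (by positivity)] at this
  calc α + β = ((α + β) ^ n) ^ (n : ℝ)⁻¹ := (Real.pow_rpow_inv_natCast (by positivity) hn.ne').symm
    _ ≤ (μ (A + B)).toReal ^ (n : ℝ)⁻¹ := Real.rpow_le_rpow (by positivity) hsum (by positivity)

theorem pow_le_addHaar_add_smul (hn : 0 < finrank ℝ F) {A B : Set F} (hA : IsCompact A)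
    (hB : IsCompact B) (hA₀ : A.Nonempty) (hB₀ : B.Nonempty) {ε : ℝ} (hε : 0 ≤ ε) :
    ((μ A).toReal ^ (finrank ℝ F : ℝ)⁻¹ + ε * (μ B).toReal ^ (finrank ℝ F : ℝ)⁻¹) ^ finrank ℝ F
      ≤ (μ (A + ε • B)).toReal := by
  have := addHaar_toReal_rpow_add_le μ hn hA (hB.smul ε) hA₀ hB₀.smul_set
  rw [Measure.addHaar_smul_of_nonneg μ hε, ENNReal.toReal_mul,
    ENNReal.toReal_ofReal (by positivity), Real.mul_rpow (by positivity) ENNReal.toReal_nonneg,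
    Real.pow_rpow_inv_natCast hε hn.ne'] at this
  calc _ ≤ ((μ (A + ε • B)).toReal ^ (finrank ℝ F : ℝ)⁻¹) ^ finrank ℝ F :=
        pow_le_pow_left₀ (by positivity) this _
    _ = (μ (A + ε • B)).toReal := Real.rpow_inv_natCast_pow ENNReal.toReal_nonneg hn.ne'

end FiniteDimensional

end BrunnMinkowski

theorem le_of_hasDerivAt_of_le_of_tendsto {ψ f : ℝ → ℝ} {a d l : ℝ} (hψ : HasDerivAt ψ d 0)
    (hψ₀ : ψ 0 = a) (hle : ∀ ε > 0, ψ ε ≤ f ε)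
    (hf : Tendsto (fun ε => (f ε - a) / ε) (𝓝[>] 0) (𝓝 l)) : d ≤ l := by
  have hslope : Tendsto (fun ε => (ψ ε - a) / ε) (𝓝[>] 0) (𝓝 d) := by
    refine ((hasDerivAt_iff_tendsto_slope.1 hψ).mono_left
      (nhdsWithin_mono 0 fun ε hε => ne_of_gt hε)).congr' ?_
    filter_upwards with ε
    rw [slope_def_field, hψ₀, sub_zero]
  refine le_of_tendsto_of_tendsto hslope hf ?_
  filter_upwards [self_mem_nhdsWithin] with ε hε
  exact div_le_div_of_nonneg_right (sub_le_sub_right (hle ε hε) a) hε.le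

theorem stmt3_general (n : ℕ) (hn : 1 ≤ n) (K L : Set (E n))
    (hK : IsCompact K) (hKi : (interior K).Nonempty)
    (hL : IsCompact L) (hLi : (interior L).Nonempty)
    (V1 : ℝ)
    (hV1 : Tendsto (fun ε : ℝ => (vol (K + ε • L) - vol K) / ε) (𝓝[>] 0)
      (𝓝 ((n : ℝ) * V1))) :
    V1 ≥ vol K ^ ((n - 1 : ℝ) / n) * vol L ^ (1 / (n : ℝ)) := by
  have hdim : Module.finrank ℝ (E n) = n := finrank_euclideanSpace_fin
  have hn₀ : n ≠ 0 := by omega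
  set α := vol K ^ (n : ℝ)⁻¹ with hα_def
  set β := vol L ^ (n : ℝ)⁻¹
  have hBM (ε : ℝ) (hε : 0 < ε) : (α + ε * β) ^ n ≤ vol (K + ε • L) := by
    have := pow_le_addHaar_add_smul volume (by rw [hdim]; omega) hK hL
      (hKi.mono interior_subset) (hLi.mono interior_subset) hε.le
    rwa [hdim] at this
  have hderiv : HasDerivAt (fun ε => (α + ε * β) ^ n) (n * α ^ (n - 1) * β) 0 := by
    simpa using (((hasDerivAt_id (0 : ℝ)).mul_const β).const_add α).fun_pow n
  have key := le_of_hasDerivAt_of_le_of_tendsto hderiv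
    (by simp [α, Real.rpow_inv_natCast_pow ENNReal.toReal_nonneg hn₀, vol]) hBM hV1
  have hαK : α ^ (n - 1) = vol K ^ ((n - 1 : ℝ) / n) := by
    rw [hα_def, ← Real.rpow_natCast, ← Real.rpow_mul (show 0 ≤ vol K from ENNReal.toReal_nonneg),
      Nat.cast_sub hn, Nat.cast_one, inv_mul_eq_div]
  rw [ge_iff_le, ← hαK, one_div]
  exact le_of_mul_le_mul_left (by linarith [key] : (n : ℝ) * (α ^ (n - 1) * β) ≤ n * V1)
    (by positivity)

theorem stmt3 (n : ℕ) (hn : 1 ≤ n) (K L : Set (E n))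
    (hK : IsCompact K) (hKc : Convex ℝ K) (hKi : (interior K).Nonempty)
    (hL : IsCompact L) (hLc : Convex ℝ L) (hLi : (interior L).Nonempty)
    (V1 : ℝ)
    (hV1 : Tendsto (fun ε : ℝ => (vol (K + ε • L) - vol K) / ε) (𝓝[>] 0)
      (𝓝 ((n : ℝ) * V1))) :
    V1 ≥ vol K ^ ((n - 1 : ℝ) / n) * vol L ^ (1 / (n : ℝ)) :=
  stmt3_general n hn K L hK hKi hL hLi V1 hV1
end
end
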